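/- Let s, r, b, c > 0. Then the statement '(for all real x₁, x₂, x₃: V₃(x) > c² implies V̇₃(x) < 0)' holds if and only if c² ≥ 4sr² and at least one of the following holds: (i) b < 2s and b < 2; (ii) (b−1)c² ≥ s·b²·r² and b < 2s; (iii) (b−s)c² ≥ b²·r² and b < 2; (iv) (b−1)c² ≥ s·b²·r² and (b−s)c² ≥ b²·r². (Quantifier-free equivalent of the Lyapunov decrease condition for the elliptical Lyapunov-like function V₃; hence Sparrow's bounds are exact with respect to the level sets of V₃.) -/

import Mathlib

/-!
Along trajectories `V̇₃ = -2s (r x₁² + x₂² + b (x₃ - r)² - b r²)`, so the decrease condition says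
exactly that the ellipsoid `E = {r x₁² + x₂² + b (x₃ - r)² ≤ b r²}` lies in the sublevel set
`{V₃ ≤ c²}`. On the slice of `E` at height `x₃ = t ∈ [0, 2r]` the term `r x₁² + s x₂²` is largest
on the `x₁`-axis if `s ≤ 1` and on the `x₂`-axis if `s ≥ 1`, where it equals `α t (2r - t)` with
`α = b` resp. `α = s b`. So the condition reduces to two bounds `α t (2r - t) + s (2r - t)² ≤ c²`
on `[0, 2r]`, and the maximum of such a quadratic is `4 s r²` at `t = 0` when `α ≤ 2s`, and
`α² r² / (α - s)` at its vertex otherwise.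
-/

open Set

theorem forall_mem_Icc_quadratic_le_iff {α β r C : ℝ} (hβ : 0 < β) (hr : 0 ≤ r) :
    (∀ t ∈ Icc 0 (2 * r), α * t * (2 * r - t) + β * (2 * r - t) ^ 2 ≤ C) ↔
      4 * β * r ^ 2 ≤ C ∧ (α < 2 * β ∨ α ^ 2 * r ^ 2 ≤ (α - β) * C) := by
  have square (t : ℝ) : (α - β) * (α * t * (2 * r - t) + β * (2 * r - t) ^ 2)
      = α ^ 2 * r ^ 2 - ((α - β) * (2 * r - t) - α * r) ^ 2 := by ring
  constructor
  · intro h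
    have h₀ : 4 * β * r ^ 2 ≤ C := by
      convert h 0 ⟨le_rfl, by linarith⟩ using 1; ring
    refine ⟨h₀, (lt_or_ge α (2 * β)).imp_right fun hα => ?_⟩
    have hαβ : 0 < α - β := by linarith
    set t := r * (α - 2 * β) / (α - β)
    have hvertex : (α - β) * (2 * r - t) = α * r := by
      simp only [t]; field_simp; ring
    have ht : t ∈ Icc 0 (2 * r) := by
      constructor
      · exact div_nonneg (mul_nonneg hr (by linarith)) hαβ.le
      · nlinarith
    calc α ^ 2 * r ^ 2 = (α - β) * (α * t * (2 * r - t) + β * (2 * r - t) ^ 2) := by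
          rw [square, hvertex]; ring
      _ ≤ (α - β) * C := mul_le_mul_of_nonneg_left (h t ht) hαβ.le
  · rintro ⟨h₀, hα⟩ t ⟨ht₀, ht₂⟩
    rcases lt_or_ge α (2 * β) with hlt | hge
    · have hgap : 4 * β * r ^ 2 - (α * t * (2 * r - t) + β * (2 * r - t) ^ 2)
          = t * (2 * r * β - (α - β) * (2 * r - t)) := by ring
      have hslope : 0 ≤ 2 * r * β - (α - β) * (2 * r - t) := by nlinarith
      linarith [mul_nonneg ht₀ hslope]
    · have hαβ : 0 < α - β := by linarith
      replace hα := hα.resolve_left hge.not_gt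
      refine le_of_mul_le_mul_left ?_ hαβ
      rw [square]
      nlinarith [sq_nonneg ((α - β) * (2 * r - t) - α * r)]

theorem lorenz_V₃_deriv_eq (s r b x₁ x₂ x₃ : ℝ) :
    2 * r * x₁ * s * (x₂ - x₁) + 2 * s * x₂ * (r * x₁ - x₂ - x₁ * x₃)
        + 2 * s * (x₃ - 2 * r) * (x₁ * x₂ - b * x₃)
      = -2 * s * (r * x₁ ^ 2 + x₂ ^ 2 + b * (x₃ - r) ^ 2 - b * r ^ 2) := by
  ring

theorem lorenz_V₃_decrease_iff {s r b C : ℝ} (hs : 0 < s) :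
    (∀ x₁ x₂ x₃ : ℝ,
        r * x₁ ^ 2 + s * x₂ ^ 2 + s * (x₃ - 2 * r) ^ 2 > C →
        2 * r * x₁ * s * (x₂ - x₁) + 2 * s * x₂ * (r * x₁ - x₂ - x₁ * x₃)
          + 2 * s * (x₃ - 2 * r) * (x₁ * x₂ - b * x₃) < 0) ↔
      ∀ x₁ x₂ x₃ : ℝ, r * x₁ ^ 2 + x₂ ^ 2 + b * (x₃ - r) ^ 2 ≤ b * r ^ 2 →
        r * x₁ ^ 2 + s * x₂ ^ 2 + s * (x₃ - 2 * r) ^ 2 ≤ C := by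
  refine forall₃_congr fun x₁ x₂ x₃ => ?_
  have hneg {W : ℝ} : -2 * s * (W - b * r ^ 2) < 0 ↔ b * r ^ 2 < W := by
    constructor <;> intro h <;> nlinarith
  rw [lorenz_V₃_deriv_eq, hneg, ← not_imp_not, not_lt, gt_iff_lt, not_lt]

theorem mem_Icc_of_ellipsoid {r b x₁ x₂ x₃ : ℝ} (hr : 0 < r) (hb : 0 < b)
    (h : r * x₁ ^ 2 + x₂ ^ 2 + b * (x₃ - r) ^ 2 ≤ b * r ^ 2) : x₃ ∈ Icc 0 (2 * r) := by
  have hsq : (x₃ - r) ^ 2 ≤ r ^ 2 := by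
    refine le_of_mul_le_mul_left ?_ hb
    nlinarith [mul_nonneg hr.le (sq_nonneg x₁), sq_nonneg x₂]
  have habs := abs_le_of_sq_le_sq' hsq hr.le
  constructor <;> linarith [habs.1, habs.2]

theorem lorenz_V₃_le_on_ellipsoid_iff {s r b C : ℝ} (hr : 0 < r) (hb : 0 < b) :
    (∀ x₁ x₂ x₃ : ℝ, r * x₁ ^ 2 + x₂ ^ 2 + b * (x₃ - r) ^ 2 ≤ b * r ^ 2 →
        r * x₁ ^ 2 + s * x₂ ^ 2 + s * (x₃ - 2 * r) ^ 2 ≤ C) ↔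
      (∀ t ∈ Icc 0 (2 * r), b * t * (2 * r - t) + s * (2 * r - t) ^ 2 ≤ C) ∧
      (∀ t ∈ Icc 0 (2 * r), s * b * t * (2 * r - t) + s * (2 * r - t) ^ 2 ≤ C) := by
  constructor
  · intro h
    have hslice {t : ℝ} (ht : t ∈ Icc 0 (2 * r)) : 0 ≤ b * t * (2 * r - t) :=
      mul_nonneg (mul_nonneg hb.le ht.1) (sub_nonneg.2 ht.2)
    have hboundary (t : ℝ) : b * t * (2 * r - t) + b * (t - r) ^ 2 = b * r ^ 2 := by ring
    constructor
    · intro t ht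
      have hx₁ : r * √(b * t * (2 * r - t) / r) ^ 2 = b * t * (2 * r - t) := by
        rw [Real.sq_sqrt (div_nonneg (hslice ht) hr.le)]; field_simp
      have := h (√(b * t * (2 * r - t) / r)) 0 t (by rw [hx₁]; simpa using (hboundary t).le)
      rw [hx₁] at this
      nlinarith
    · intro t ht
      have hx₂ : √(b * t * (2 * r - t)) ^ 2 = b * t * (2 * r - t) := Real.sq_sqrt (hslice ht)
      have := h 0 (√(b * t * (2 * r - t))) t (by rw [hx₂]; simpa using (hboundary t).le)
      rw [hx₂] at this
      nlinarith
  · rintro ⟨h₁, h₂⟩ x₁ x₂ x₃ hE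
    have hx₃ := mem_Icc_of_ellipsoid hr hb hE
    have hslice : r * x₁ ^ 2 + x₂ ^ 2 ≤ b * x₃ * (2 * r - x₃) := by nlinarith
    rcases le_total s 1 with hs | hs
    · calc r * x₁ ^ 2 + s * x₂ ^ 2 + s * (x₃ - 2 * r) ^ 2
          ≤ b * x₃ * (2 * r - x₃) + s * (2 * r - x₃) ^ 2 := by
            nlinarith [mul_nonneg (sub_nonneg.2 hs) (sq_nonneg x₂)]
        _ ≤ C := h₁ x₃ hx₃
    · calc r * x₁ ^ 2 + s * x₂ ^ 2 + s * (x₃ - 2 * r) ^ 2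
          ≤ s * b * x₃ * (2 * r - x₃) + s * (2 * r - x₃) ^ 2 := by
            nlinarith [mul_nonneg (sub_nonneg.2 hs) (mul_nonneg hr.le (sq_nonneg x₁)),
              mul_le_mul_of_nonneg_left hslice (zero_le_one.trans hs)]
        _ ≤ C := h₂ x₃ hx₃

theorem lorenz_ellipse_bound_qe_general
    (s r b c : ℝ) (hs : 0 < s) (hr : 0 < r) (hb : 0 < b) :
    (∀ x₁ x₂ x₃ : ℝ,
        r * x₁ ^ 2 + s * x₂ ^ 2 + s * (x₃ - 2 * r) ^ 2 > c ^ 2 →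
        2 * r * x₁ * s * (x₂ - x₁) + 2 * s * x₂ * (r * x₁ - x₂ - x₁ * x₃)
          + 2 * s * (x₃ - 2 * r) * (x₁ * x₂ - b * x₃) < 0)
    ↔ (c ^ 2 ≥ 4 * s * r ^ 2 ∧
        ((b < 2 * s ∧ b < 2) ∨
         ((b - 1) * c ^ 2 ≥ s * b ^ 2 * r ^ 2 ∧ b < 2 * s) ∨
         ((b - s) * c ^ 2 ≥ b ^ 2 * r ^ 2 ∧ b < 2) ∨
         ((b - 1) * c ^ 2 ≥ s * b ^ 2 * r ^ 2 ∧ (b - s) * c ^ 2 ≥ b ^ 2 * r ^ 2))) := by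
  have hb_two : s * b < 2 * s ↔ b < 2 := by
    rw [mul_comm 2 s]; exact mul_lt_mul_iff_of_pos_left hs
  have hb_one : (s * b) ^ 2 * r ^ 2 ≤ (s * b - s) * c ^ 2 ↔ s * b ^ 2 * r ^ 2 ≤ (b - 1) * c ^ 2 := by
    rw [show (s * b) ^ 2 * r ^ 2 = s * (s * b ^ 2 * r ^ 2) by ring,
      show (s * b - s) * c ^ 2 = s * ((b - 1) * c ^ 2) by ring]
    exact mul_le_mul_iff_of_pos_left hs
  rw [lorenz_V₃_decrease_iff hs, lorenz_V₃_le_on_ellipsoid_iff hr hb,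
    forall_mem_Icc_quadratic_le_iff hs hr.le, forall_mem_Icc_quadratic_le_iff hs hr.le,
    hb_two, hb_one]
  simp only [ge_iff_le]
  tauto

/-- Quantifier-free equivalent of the Lyapunov decrease condition for the elliptical
Lyapunov-like function `V₃(x) = r·x₁² + s·x₂² + s·(x₃−2r)²` of the Lorenz system. -/
theorem lorenz_ellipse_bound_qe
    (s r b c : ℝ) (hs : 0 < s) (hr : 0 < r) (hb : 0 < b) (hc : 0 < c) :
    (∀ x₁ x₂ x₃ : ℝ,
        r * x₁ ^ 2 + s * x₂ ^ 2 + s * (x₃ - 2 * r) ^ 2 > c ^ 2 →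
        2 * r * x₁ * s * (x₂ - x₁) + 2 * s * x₂ * (r * x₁ - x₂ - x₁ * x₃)
          + 2 * s * (x₃ - 2 * r) * (x₁ * x₂ - b * x₃) < 0)
    ↔ (c ^ 2 ≥ 4 * s * r ^ 2 ∧
        ((b < 2 * s ∧ b < 2) ∨
         ((b - 1) * c ^ 2 ≥ s * b ^ 2 * r ^ 2 ∧ b < 2 * s) ∨
         ((b - s) * c ^ 2 ≥ b ^ 2 * r ^ 2 ∧ b < 2) ∨
         ((b - 1) * c ^ 2 ≥ s * b ^ 2 * r ^ 2 ∧ (b - s) * c ^ 2 ≥ b ^ 2 * r ^ 2))) :=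
  lorenz_ellipse_bound_qe_general s r b c hs hr hb
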